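/- For s ≥ 2, the complex number A_{s-1}(i)/((1+i)^{s-2} · (s-1)!) equals the coefficient of z^{s-1} in the Taylor expansion of sec z + tan z; in particular it is a real (indeed rational) number. -/

import Mathlib

open PowerSeries Complex

/-!
The recurrence `A_n(t) = ∑_{m<n} C(n,m) (t-1)^(n-1-m) A_m(t)`, read off from
`(1 - X)^(n+1) ∑ (k+1)^n X^k` and the binomial theorem, says that the exponential generating
function `F` of `A_n(t)` satisfies `(e^{(t-1)z} - t) F = 1 - t`. At `t = i` we have
`i - 1 = i (1 + i)`, so `F(z) = (1 - i) G((1 + i) z)` with `G(z) = 1 / (e^{iz} - i)`, while Euler's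
formulas turn `(1 + sin z) / cos z` into `2 G(z) - i`. Comparing coefficients of `z^n`, `n ≥ 1`,
with `g_n` those of `G`, gives `A_n(i) / n! = (1 - i)(1 + i)^n g_n = 2 (1 + i)^(n-1) g_n`.
Rationality holds because `sec + tan` is the image of the same series over `ℚ`.
-/

namespace PowerSeries

theorem constantCoeff_rescale {R : Type*} [CommSemiring R] (a : R) (φ : R⟦X⟧) :
    constantCoeff (rescale a φ) = constantCoeff φ := by
  rw [← coeff_zero_eq_constantCoeff_apply, ← coeff_zero_eq_constantCoeff_apply, coeff_rescale,
    pow_zero, one_mul]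

theorem rescale_C {R : Type*} [CommSemiring R] (a r : R) : rescale a (C r) = C r := by
  ext n
  rcases eq_or_ne n 0 with rfl | hn
  · simp [coeff_rescale]
  · rw [coeff_rescale, coeff_C, if_neg hn, mul_zero]

theorem rescale_inv {k : Type*} [Field k] (a : k) (φ : k⟦X⟧) :
    rescale a φ⁻¹ = (rescale a φ)⁻¹ := by
  by_cases h : constantCoeff φ = 0
  · rw [inv_eq_zero.mpr h, inv_eq_zero.mpr (by rwa [constantCoeff_rescale]), map_zero]
  · rw [eq_inv_iff_mul_eq_one (by rwa [constantCoeff_rescale]), ← map_mul,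
      PowerSeries.inv_mul_cancel _ h, map_one]

theorem map_inv {k K : Type*} [Field k] [Field K] (f : k →+* K) (φ : k⟦X⟧) :
    map f φ⁻¹ = (map f φ)⁻¹ := by
  have hc : constantCoeff (map f φ) = f (constantCoeff φ) := by
    rw [← coeff_zero_eq_constantCoeff_apply, coeff_map, coeff_zero_eq_constantCoeff_apply]
  by_cases h : constantCoeff φ = 0
  · rw [inv_eq_zero.mpr h, inv_eq_zero.mpr (by rw [hc, h, map_zero]), map_zero]
  · rw [eq_inv_iff_mul_eq_one (by rwa [hc, map_ne_zero]), ← map_mul,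
      PowerSeries.inv_mul_cancel _ h, map_one]

theorem map_one_add_sin_mul_cos_inv {k K : Type*} [Field k] [Field K] [CharZero k] [CharZero K]
    (f : k →+* K) : map f ((1 + sin k) * (cos k)⁻¹) = (1 + sin K) * (cos K)⁻¹ := by
  rw [map_mul, map_add, map_one, map_sin, map_inv, map_cos]

theorem two_mul_cos_eq : 2 * cos ℂ = rescale I (exp ℂ) + rescale (-I) (exp ℂ) := by
  rw [← map_ofNat C 2]
  ext n
  obtain ⟨m, rfl | rfl⟩ := Nat.even_or_odd' n
  · simp [PowerSeries.cos, coeff_rescale, pow_mul, div_eq_mul_inv]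
    ring
  · simp [PowerSeries.cos, coeff_rescale, pow_succ, pow_mul]

theorem two_mul_C_I_mul_sin_eq :
    2 * C I * sin ℂ = rescale I (exp ℂ) - rescale (-I) (exp ℂ) := by
  rw [← map_ofNat C 2, ← map_mul]
  ext n
  rw [coeff_C_mul]
  obtain ⟨m, rfl | rfl⟩ := Nat.even_or_odd' n
  · simp [PowerSeries.sin, coeff_rescale, pow_mul]
  · have hm : (2 * m + 1) / 2 = m := by omega
    simp [PowerSeries.sin, coeff_rescale, pow_succ, pow_mul, div_eq_mul_inv, hm]
    ring

theorem constantCoeff_rescale_exp_sub_C_I_ne_zero (a : ℂ) :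
    constantCoeff (rescale a (exp ℂ) - C I) ≠ 0 := by
  rw [map_sub, constantCoeff_rescale, constantCoeff_C, ← coeff_zero_eq_constantCoeff_apply,
    coeff_exp]
  simp [sub_eq_zero, Complex.ext_iff]

theorem one_add_sin_mul_cos_inv_eq :
    (1 + sin ℂ) * (cos ℂ)⁻¹ = 2 * (rescale I (exp ℂ) - C I)⁻¹ - C I := by
  set u := rescale I (exp ℂ)
  set v := rescale (-I) (exp ℂ)
  set g := (u - C I)⁻¹
  have hc : 2 * cos ℂ = u + v := two_mul_cos_eq
  have hs : 2 * C I * sin ℂ = u - v := two_mul_C_I_mul_sin_eq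
  have huv : u * v = 1 := by
    rw [exp_mul_exp_eq_exp_add, add_neg_cancel, rescale_zero_apply]
    simp
  have hI : C I * C I = -1 := by rw [← map_mul, I_mul_I, map_neg, map_one]
  have hg : g * (u - C I) = 1 :=
    PowerSeries.inv_mul_cancel _ (constantCoeff_rescale_exp_sub_C_I_ne_zero I)
  have h2 : (2 : ℂ⟦X⟧) ≠ 0 := fun h => by
    simpa [← map_ofNat C 2] using congrArg constantCoeff h
  have key : (u - C I) * (1 + sin ℂ + C I * cos ℂ) = 2 * cos ℂ := by
    apply mul_left_cancel₀ h2
    linear_combination ((u - C I) * C I - 2) * hc - (u - C I) * C I * hs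
      + 2 * sin ℂ * (u - C I) * hI + 2 * C I * huv - 2 * v * hI
  have hcos : constantCoeff (cos ℂ) ≠ 0 := by simp [PowerSeries.cos]
  symm
  rw [eq_mul_inv_iff_mul_eq hcos]
  linear_combination (1 + sin ℂ + C I * cos ℂ) * hg - g * key

end PowerSeries

section Eulerian

open Finset (range sum_congr mem_range sum_range_succ sum_neg_distrib mul_sum sum_div)

variable {R : Type*} [CommRing R]

theorem add_one_pow_sub_pow (x : R) (n : ℕ) :
    (x + 1) ^ n - x ^ n
      = ∑ m ∈ range n, (n.choose m * (-1) ^ (n - 1 - m) : R) * (x + 1) ^ m := by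
  have h := add_pow (x + 1) (-1) n
  rw [add_neg_cancel_right, sum_range_succ, Nat.choose_self, Nat.sub_self] at h
  rw [h, pow_zero, Nat.cast_one, mul_one, mul_one, sub_add_cancel_right, ← sum_neg_distrib]
  refine sum_congr rfl fun m hm => ?_
  rw [show n - m = n - 1 - m + 1 by have := mem_range.mp hm; omega, pow_succ]
  ring

theorem one_sub_X_mul_mk_add_one_pow {n : ℕ} (hn : n ≠ 0) :
    (1 - X : R⟦X⟧) * mk (fun k => ((k : R) + 1) ^ n)
      = ∑ m ∈ range n,
          C (n.choose m * (-1) ^ (n - 1 - m) : R) * mk (fun k => ((k : R) + 1) ^ m) := by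
  ext k
  simp only [sub_mul, one_mul, map_sub, map_sum, coeff_C_mul, coeff_mk]
  cases k with
  | zero => simpa [zero_pow hn] using add_one_pow_sub_pow (0 : R) n
  | succ k =>
    rw [coeff_succ_X_mul, coeff_mk, ← add_one_pow_sub_pow]
    push_cast
    ring

variable (A : ℕ → Polynomial R)
  (hA : ∀ n, (A n : R⟦X⟧) = (1 - X) ^ (n + 1) * mk (fun k => ((k : R) + 1) ^ n))
include hA

theorem eulerian_zero : A 0 = 1 := by
  apply Polynomial.coe_injective
  rw [hA, Polynomial.coe_one, pow_one, mul_comm]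
  simp_rw [pow_zero]
  exact mk_one_mul_one_sub_eq_one R

theorem eulerian_recurrence {n : ℕ} (hn : n ≠ 0) :
    A n = ∑ m ∈ range n,
      Polynomial.C (n.choose m : R) * (Polynomial.X - 1) ^ (n - 1 - m) * A m := by
  apply Polynomial.coe_injective
  rw [← Polynomial.coeToPowerSeries.ringHom_apply (φ := ∑ m ∈ range n, _), map_sum, hA,
    pow_succ, mul_assoc, one_sub_X_mul_mk_add_one_pow hn, mul_sum]
  refine sum_congr rfl fun m hm => ?_
  have hsplit : (1 - X : R⟦X⟧) ^ n = (1 - X) ^ (n - 1 - m) * (1 - X) ^ (m + 1) := by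
    rw [← pow_add]
    congr 1
    have := mem_range.mp hm
    omega
  rw [Polynomial.coeToPowerSeries.ringHom_apply]
  push_cast
  rw [hA, hsplit, ← neg_sub 1 X, neg_pow (1 - X : R⟦X⟧), map_mul, map_pow, map_neg, map_one]
  ring

theorem eval_eulerian_recurrence {n : ℕ} (hn : n ≠ 0) (t : R) :
    (A n).eval t = ∑ m ∈ range n, n.choose m * (t - 1) ^ (n - 1 - m) * (A m).eval t := by
  rw [eulerian_recurrence A hA hn]
  simp [Polynomial.eval_finsetSum]

end Eulerian

open Finset (range sum_congr mem_range sum_range_succ mul_sum sum_div) in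
theorem eulerian_egf {K : Type*} [Field K] [CharZero K] (A : ℕ → Polynomial K)
    (hA : ∀ n, (A n : K⟦X⟧) = (1 - X) ^ (n + 1) * mk (fun k => ((k : K) + 1) ^ n)) (t : K) :
    (rescale (t - 1) (exp K) - C t) * mk (fun n => (A n).eval t / n.factorial) = C (1 - t) := by
  set F := mk (fun n => (A n).eval t / n.factorial)
  suffices h : F * (rescale (t - 1) (exp K) - 1) = C (t - 1) * (F - 1) by
    rw [map_sub, map_one] at h ⊢
    linear_combination h
  ext n
  rw [coeff_mul, Finset.Nat.sum_antidiagonal_eq_sum_range_succ_mk, sum_range_succ, coeff_C_mul]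
  rcases eq_or_ne n 0 with rfl | hn
  · simp [F, eulerian_zero A hA, constantCoeff_rescale]
  simp only [F, coeff_mk, map_sub, coeff_rescale, coeff_exp, coeff_one, if_neg hn, Nat.sub_self,
    if_true, pow_zero, Nat.factorial_zero, Nat.cast_one, div_one, map_one, mul_one, sub_self,
    mul_zero, add_zero, sub_zero, eq_ratCast, Rat.cast_div, Rat.cast_one, Rat.cast_natCast]
  rw [eval_eulerian_recurrence A hA hn, sum_div, mul_sum]
  refine sum_congr rfl fun m hm => ?_
  have hmn := mem_range.mp hm
  have hpow : (t - 1) ^ (n - m) = (t - 1) * (t - 1) ^ (n - 1 - m) := by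
    rw [← pow_succ', show n - 1 - m + 1 = n - m by omega]
  have hfact : (n.factorial : K) ≠ 0 := Nat.cast_ne_zero.mpr n.factorial_ne_zero
  rw [if_neg (by omega), sub_zero, Nat.cast_choose K hmn.le, hpow]
  field_simp

theorem eval_I_eulerian_div_factorial (A : ℕ → Polynomial ℂ)
    (hA : ∀ n, (A n : ℂ⟦X⟧) = (1 - X) ^ (n + 1) * mk (fun k => ((k : ℂ) + 1) ^ n))
    (n : ℕ) :
    (A n).eval I / n.factorial
      = (1 - I) * (1 + I) ^ n * coeff n (rescale I (exp ℂ) - C I)⁻¹ := by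
  have hI : I * (1 + I) = I - 1 := by rw [mul_add, I_mul_I]; ring
  have hF : mk (fun n => (A n).eval I / n.factorial)
      = C (1 - I) * rescale (1 + I) (rescale I (exp ℂ) - C I)⁻¹ := by
    rw [rescale_inv, map_sub (rescale _), rescale_rescale, rescale_C, hI,
      eq_mul_inv_iff_mul_eq (constantCoeff_rescale_exp_sub_C_I_ne_zero _), mul_comm]
    exact eulerian_egf A hA I
  rw [← coeff_mk n (fun n => (A n).eval I / n.factorial), hF, coeff_C_mul, coeff_rescale,
    mul_assoc]

/-- For `s ≥ 2`, `A_{s-1}(i)/((1+i)^{s-2}·(s-1)!)` is the coefficient of `z^{s-1}`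
in `sec z + tan z = (1 + sin z)/cos z`; in particular it is a rational number. -/
theorem eulerian_coeff_secant_tangent (s : ℕ) (hs : 2 ≤ s) (A : ℕ → Polynomial ℂ)
    (hA : ∀ n, ((A n : PowerSeries ℂ)) =
      (1 - X) ^ (n + 1) * PowerSeries.mk (fun k => ((k : ℂ) + 1) ^ n)) :
    (A (s - 1)).eval I / ((1 + I) ^ (s - 2) * (s - 1).factorial)
      = PowerSeries.coeff (s - 1) ((1 + PowerSeries.sin ℂ) * (PowerSeries.cos ℂ)⁻¹)
    ∧ ∃ q : ℚ, (A (s - 1)).eval I / ((1 + I) ^ (s - 2) * (s - 1).factorial) = (q : ℂ) := by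
  obtain ⟨n, rfl⟩ : ∃ n, s = n + 2 := ⟨s - 2, by omega⟩
  simp only [Nat.add_sub_cancel, show n + 2 - 1 = n + 1 by omega]
  have hcoeff : (A (n + 1)).eval I / ((1 + I) ^ n * (n + 1).factorial)
      = coeff (n + 1) ((1 + sin ℂ) * (cos ℂ)⁻¹) := by
    have h1I : (1 + I) ^ n ≠ 0 := pow_ne_zero _ (by simp [Complex.ext_iff])
    rw [one_add_sin_mul_cos_inv_eq, map_sub, coeff_C, if_neg n.succ_ne_zero, sub_zero, two_mul,
      map_add, mul_comm, ← div_div, eval_I_eulerian_div_factorial A hA, pow_succ]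
    field_simp
    linear_combination (-coeff (n + 1) (rescale I (exp ℂ) - C I)⁻¹) * I_mul_I
  refine ⟨hcoeff, coeff (n + 1) ((1 + sin ℚ) * (cos ℚ)⁻¹), ?_⟩
  rw [hcoeff, ← map_one_add_sin_mul_cos_inv (algebraMap ℚ ℂ), coeff_map]
  exact eq_ratCast _ _
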